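/- For a set of formulas Γ and terms u1, u2, the following are equivalent: (1) u1 ≡_Γ u2; (2) there exists a finite sequence of terms t_0, ..., t_n with n ≥ 0 such that t_0 = u1, t_n = u2, and for every 0 ≤ i < n the equation t_i = t_{i+1} belongs to [Γ], where [Γ] = { s^n t1 = s^n t2 : n ∈ ℕ, and either t1 = t2 ∈ Γ or t2 = t1 ∈ Γ }. -/

import Mathlib

namespace CLKID

/-- Terms of the language: variables, the constant `0`, and the unary function `s`. -/
inductive Tm : Type where
  | var : ℕ → Tm
  | zero : Tm
  | s : Tm → Tm
deriving DecidableEq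

/-- `sIter n t` is the term `s^n t`. -/
def sIter : ℕ → Tm → Tm
  | 0, t => t
  | n + 1, t => Tm.s (sIter n t)

/-- Substitution on terms. -/
def Tm.subst (θ : ℕ → Tm) : Tm → Tm
  | .var x => θ x
  | .zero => .zero
  | .s t => .s (t.subst θ)

/-- Free variables of a term. -/
def Tm.fv : Tm → Set ℕ
  | .var x => {x}
  | .zero => ∅
  | .s t => t.fv

/-- Subterms of a term. -/
def Tm.sub : Tm → Set Tm
  | .var x => {Tm.var x}
  | .zero => {Tm.zero}
  | .s t => insert (Tm.s t) t.sub

/-- The variable of a term (`none` if the term is of the form `s^n 0`). -/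
def Tm.varOf : Tm → Option ℕ
  | .var x => some x
  | .zero => none
  | .s t => t.varOf

/-- Formulas: equations, the two inductive-predicate atoms `Add1`/`Add2`,
    and the usual first-order connectives and quantifiers. -/
inductive Fm : Type where
  | eq : Tm → Tm → Fm
  | add1 : Tm → Tm → Tm → Fm
  | add2 : Tm → Tm → Tm → Fm
  | not : Fm → Fm
  | and : Fm → Fm → Fm
  | or : Fm → Fm → Fm
  | imp : Fm → Fm → Fm
  | all : ℕ → Fm → Fm
  | ex : ℕ → Fm → Fm
deriving DecidableEq

/-- Substitution on formulas. -/
def Fm.subst (θ : ℕ → Tm) : Fm → Fm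
  | .eq t u => .eq (t.subst θ) (u.subst θ)
  | .add1 a b c => .add1 (a.subst θ) (b.subst θ) (c.subst θ)
  | .add2 a b c => .add2 (a.subst θ) (b.subst θ) (c.subst θ)
  | .not φ => .not (φ.subst θ)
  | .and φ ψ => .and (φ.subst θ) (ψ.subst θ)
  | .or φ ψ => .or (φ.subst θ) (ψ.subst θ)
  | .imp φ ψ => .imp (φ.subst θ) (ψ.subst θ)
  | .all x φ => .all x (φ.subst (Function.update θ x (Tm.var x)))
  | .ex x φ => .ex x (φ.subst (Function.update θ x (Tm.var x)))

/-- Free variables of a formula. -/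
def Fm.fv : Fm → Set ℕ
  | .eq t u => t.fv ∪ u.fv
  | .add1 a b c => a.fv ∪ b.fv ∪ c.fv
  | .add2 a b c => a.fv ∪ b.fv ∪ c.fv
  | .not φ => φ.fv
  | .and φ ψ => φ.fv ∪ ψ.fv
  | .or φ ψ => φ.fv ∪ ψ.fv
  | .imp φ ψ => φ.fv ∪ ψ.fv
  | .all x φ => φ.fv \ {x}
  | .ex x φ => φ.fv \ {x}

/-- Terms occurring in a formula. -/
def Fm.tms : Fm → Set Tm
  | .eq t u => t.sub ∪ u.sub
  | .add1 a b c => a.sub ∪ b.sub ∪ c.sub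
  | .add2 a b c => a.sub ∪ b.sub ∪ c.sub
  | .not φ => φ.tms
  | .and φ ψ => φ.tms ∪ ψ.tms
  | .or φ ψ => φ.tms ∪ ψ.tms
  | .imp φ ψ => φ.tms ∪ ψ.tms
  | .all _ φ => φ.tms
  | .ex _ φ => φ.tms

/-- The substitution `[x := t]`. -/
def sub1 (x : ℕ) (t : Tm) : ℕ → Tm := fun y => if y = x then t else Tm.var y

/-- The simultaneous substitution `[v1 := t, v2 := u]`. -/
def sub2 (v1 v2 : ℕ) (t u : Tm) : ℕ → Tm :=
  fun z => if z = v1 then t else if z = v2 then u else Tm.var z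

/-- `≡_Γ`: the smallest congruence relation on terms containing all pairs `(t, u)`
    with the equation `t = u` in `Γ`. -/
inductive EqvTm (Γ : Set Fm) : Tm → Tm → Prop where
  | base {t u : Tm} : Fm.eq t u ∈ Γ → EqvTm Γ t u
  | refl (t : Tm) : EqvTm Γ t t
  | symm {t u : Tm} : EqvTm Γ t u → EqvTm Γ u t
  | trans {t u v : Tm} : EqvTm Γ t u → EqvTm Γ u v → EqvTm Γ t v
  | sCongr {t u : Tm} : EqvTm Γ t u → EqvTm Γ (Tm.s t) (Tm.s u)

/-- `t ~_Γ u` : `s^n t ≡_Γ s^m u` for some naturals `n`, `m`. -/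
def DepTm (Γ : Set Fm) (t u : Tm) : Prop := ∃ n m : ℕ, EqvTm Γ (sIter n t) (sIter m u)

/-- A sequent: a pair of finite sets of formulas. -/
structure Seq where
  ant : Finset Fm
  suc : Finset Fm

/-- The antecedent of a sequent, as a set of formulas. -/
def antSet (S : Seq) : Set Fm := ↑S.ant

/-- `[Γ]` from Lemma on chains: `{ s^n t1 = s^n t2 | t1 = t2 ∈ Γ or t2 = t1 ∈ Γ }`. -/
def brkt (Γ : Set Fm) : Set Fm :=
  {φ | ∃ (n : ℕ) (t1 t2 : Tm), φ = Fm.eq (sIter n t1) (sIter n t2) ∧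
        (Fm.eq t1 t2 ∈ Γ ∨ Fm.eq t2 t1 ∈ Γ)}

/-- `B1(Γ ⊢ Δ)` : second arguments of `Add1` atoms in the consequent. -/
def B1 (S : Seq) : Set Tm := {b | ∃ a c, Fm.add1 a b c ∈ S.suc}

/-- `C(Γ ⊢ Δ)` : third arguments of `Add2` atoms in the antecedent
    or `Add1` atoms in the consequent. -/
def Cset (S : Seq) : Set Tm :=
  {c | (∃ a b, Fm.add2 a b c ∈ S.ant) ∨ (∃ a b, Fm.add1 a b c ∈ S.suc)}

/-- Index sequent. -/
def IndexSequent (S : Seq) : Prop :=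
  (∀ t ∈ B1 S, ∀ u ∈ Cset S, ¬ DepTm (antSet S) t u) ∧
  (∀ b ∈ B1 S, ∀ b' ∈ B1 S, ∀ n m : ℕ, EqvTm (antSet S) (sIter n b) (sIter m b') → n = m)

/-! Since `[Γ]` is symmetric and closed under `s`, its reflexive-transitive closure is already a
congruence containing `Γ`, and it is contained in `≡_Γ`; so the two coincide, and reflexive-transitive
closure is exactly chaining of finitely many steps. -/

open Relation

theorem _root_.Relation.reflTransGen_iff_exists_seq {α : Type*} {r : α → α → Prop} {a b : α} :
    ReflTransGen r a b ↔
      ∃ (n : ℕ) (t : ℕ → α), t 0 = a ∧ t n = b ∧ ∀ i < n, r (t i) (t (i + 1)) := by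
  constructor
  · intro h
    induction h using ReflTransGen.head_induction_on with
    | refl => exact ⟨0, fun _ => b, rfl, rfl, fun _ h => absurd h (Nat.not_lt_zero _)⟩
    | head hac _ ih =>
      obtain ⟨n, t, ht0, htn, hstep⟩ := ih
      refine ⟨n + 1, Nat.rec _ fun i _ => t i, rfl, htn, ?_⟩
      rintro (_ | i) hi
      · show r _ (t 0)
        rwa [ht0]
      · exact hstep i (Nat.lt_of_succ_lt_succ hi)
  · rintro ⟨n, t, rfl, rfl, hstep⟩
    exact (reflTransGen_of_succ_of_le (fun i j => r (t i) (t j))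
      (fun i hi => hstep i hi.2) n.zero_le).lift t fun _ _ h => h

def BrktStep (Γ : Set Fm) (a b : Tm) : Prop := Fm.eq a b ∈ brkt Γ

theorem BrktStep.symm {Γ : Set Fm} {a b : Tm} (h : BrktStep Γ a b) : BrktStep Γ b a := by
  obtain ⟨n, t1, t2, heq, hΓ⟩ := h
  obtain ⟨rfl, rfl⟩ := Fm.eq.inj heq
  exact ⟨n, t2, t1, rfl, hΓ.symm⟩

instance (Γ : Set Fm) : Std.Symm (BrktStep Γ) := ⟨fun _ _ => BrktStep.symm⟩

theorem BrktStep.s {Γ : Set Fm} {a b : Tm} (h : BrktStep Γ a b) :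
    BrktStep Γ (Tm.s a) (Tm.s b) := by
  obtain ⟨n, t1, t2, heq, hΓ⟩ := h
  obtain ⟨rfl, rfl⟩ := Fm.eq.inj heq
  exact ⟨n + 1, t1, t2, rfl, hΓ⟩

theorem EqvTm.sIter {Γ : Set Fm} {t u : Tm} (h : EqvTm Γ t u) (n : ℕ) :
    EqvTm Γ (sIter n t) (sIter n u) := by
  induction n with
  | zero => exact h
  | succ n ih => exact ih.sCongr

theorem EqvTm.of_brktStep {Γ : Set Fm} {a b : Tm} (h : BrktStep Γ a b) : EqvTm Γ a b := by
  obtain ⟨n, t1, t2, heq, hΓ⟩ := h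
  obtain ⟨rfl, rfl⟩ := Fm.eq.inj heq
  rcases hΓ with h | h
  · exact (EqvTm.base h).sIter n
  · exact (EqvTm.base h).symm.sIter n

theorem eqvTm_iff_reflTransGen_brktStep {Γ : Set Fm} {u v : Tm} :
    EqvTm Γ u v ↔ ReflTransGen (BrktStep Γ) u v := by
  constructor
  · intro h
    induction h with
    | base h => exact .single ⟨0, _, _, rfl, Or.inl h⟩
    | refl t => exact .refl
    | symm _ ih => exact Std.Symm.symm _ _ ih
    | trans _ _ ih₁ ih₂ => exact ih₁.trans ih₂
    | sCongr _ ih => exact ih.lift Tm.s fun _ _ => BrktStep.s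
  · intro h
    induction h with
    | refl => exact .refl u
    | tail _ hstep ih => exact ih.trans (.of_brktStep hstep)

/-- `u1 ≡_Γ u2` iff `u1` and `u2` are joined by a finite chain
    of equations in `[Γ]`. -/
theorem eqv_iff_chain (Γ : Set Fm) (u1 u2 : Tm) :
    EqvTm Γ u1 u2 ↔
      ∃ (n : ℕ) (t : ℕ → Tm), t 0 = u1 ∧ t n = u2 ∧
        ∀ i, i < n → Fm.eq (t i) (t (i + 1)) ∈ brkt Γ :=
  eqvTm_iff_reflTransGen_brktStep.trans reflTransGen_iff_exists_seq

end CLKID
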